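/- Let L be the relational first-order language (with equality) whose relation symbols are a nullary symbol E, unary symbols F and G, and a binary symbol H, and let L' extend L by one additional unary relation symbol B. Let φ be the L'-sentence E ∧ (∀ y, F y ∨ B y) ∧ (∀ y', G y' ∨ ¬ B y') ∧ (∀ y y', H y y' ∨ B y ∨ ¬ B y'). For a nonempty L-structure M with interpretations E^M, F^M, G^M, H^M, define semantically H^0_M y y' := (y ≠ y'), H^k_M y y' := ∀ y₁, H^{k-1}_M y y₁ ∨ H^M y₁ y' for k > 0, and (G∘H^i∘F)_M := ∀ y', (∀ y, G^M y ∨ H^i_M y y') ∨ F^M y'. Suppose ∃B.φ is first-order definable, i.e., there exists an L-sentence χ such that every nonempty L-structure M satisfies χ if and only if there exists a predicate B₀ on the domain of M making (M, B₀) a model of φ. Then there exists k ≥ 0 such that every nonempty L-structure M satisfies χ if and only if E^M ∧ ⋀_{i=0}^k (G∘H^i∘F)_M holds. -/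

import Mathlib

open FirstOrder FirstOrder.Language

/-- Relation symbols of the language `L`: a nullary `E`, unary `F` and `G`, binary `H`. -/
inductive LRel : ℕ → Type
  | E : LRel 0
  | F : LRel 1
  | G : LRel 1
  | H : LRel 2

/-- Relation symbols of the language `L'` extending those of `L` by a unary `B`. -/
inductive LRelB : ℕ → Type
  | E : LRelB 0
  | F : LRelB 1
  | G : LRelB 1
  | H : LRelB 2
  | B : LRelB 1

/-- The relational language `L` with nullary `E`, unary `F`, `G` and binary `H`. -/
def L : FirstOrder.Language where
  Functions := fun _ => Empty
  Relations := LRel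

/-- The relational language `L'` extending `L` by one unary relation symbol `B`. -/
def L' : FirstOrder.Language where
  Functions := fun _ => Empty
  Relations := LRelB

/-- The `L'`-sentence
`φ = E ∧ (∀ y, F y ∨ B y) ∧ (∀ y', G y' ∨ ¬ B y') ∧ (∀ y y', H y y' ∨ B y ∨ ¬ B y')`. -/
def phiSent : L'.Sentence :=
  (Relations.boundedFormula (LRelB.E) ![]) ⊓
  (∀' (Relations.boundedFormula₁ LRelB.F &0 ⊔ Relations.boundedFormula₁ LRelB.B &0)) ⊓
  (∀' (Relations.boundedFormula₁ LRelB.G &0 ⊔ ∼(Relations.boundedFormula₁ LRelB.B &0))) ⊓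
  (∀' ∀' (Relations.boundedFormula₂ LRelB.H &0 &1 ⊔ Relations.boundedFormula₁ LRelB.B &0 ⊔
    ∼(Relations.boundedFormula₁ LRelB.B &1)))

/-- The expansion of an `L`-structure `M` by a predicate `B₀` interpreting
the additional unary relation symbol `B` of `L'`. -/
def extStruct (M : Type*) [L.Structure M] (B₀ : M → Prop) : L'.Structure M where
  funMap := fun {_} f => Empty.elim f
  RelMap := fun {n} r xs =>
    match n, r, xs with
    | 0, LRelB.E, xs => Structure.RelMap (L := L) LRel.E xs
    | 1, LRelB.F, xs => Structure.RelMap (L := L) LRel.F xs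
    | 1, LRelB.G, xs => Structure.RelMap (L := L) LRel.G xs
    | 1, LRelB.B, xs => B₀ (xs 0)
    | 2, LRelB.H, xs => Structure.RelMap (L := L) LRel.H xs

/-- The interpretation `E^M` of the nullary symbol `E`. -/
def EM (M : Type*) [L.Structure M] : Prop :=
  Structure.RelMap (L := L) LRel.E (![] : Fin 0 → M)

/-- The interpretation `F^M` of the unary symbol `F`. -/
def FM (M : Type*) [L.Structure M] (y : M) : Prop :=
  Structure.RelMap (L := L) LRel.F ![y]

/-- The interpretation `G^M` of the unary symbol `G`. -/
def GM (M : Type*) [L.Structure M] (y : M) : Prop :=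
  Structure.RelMap (L := L) LRel.G ![y]

/-- The interpretation `H^M` of the binary symbol `H`. -/
def HM (M : Type*) [L.Structure M] (y y' : M) : Prop :=
  Structure.RelMap (L := L) LRel.H ![y, y']

/-- The semantic iterates `H^k_M`:
`H^0_M y y' := y ≠ y'` and `H^(k+1)_M y y' := ∀ y₁, H^k_M y y₁ ∨ H^M y₁ y'`. -/
def HiterM (M : Type*) [L.Structure M] : ℕ → M → M → Prop
  | 0 => fun y y' => y ≠ y'
  | k + 1 => fun y y' => ∀ y₁, HiterM M k y y₁ ∨ HM M y₁ y'

/-- The semantic condition `(G∘H^i∘F)_M := ∀ y', (∀ y, G^M y ∨ H^i_M y y') ∨ F^M y'`. -/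
def GHF (M : Type*) [L.Structure M] (i : ℕ) : Prop :=
  ∀ y' : M, (∀ y : M, GM M y ∨ HiterM M i y y') ∨ FM M y'

universe u

/-!
A predicate `B` satisfying `∀ y, F y ∨ B y` and `∀ y y', H y y' ∨ B y ∨ ¬ B y'` must contain
every `y` with `¬ H^i y y'` for some `y' ∉ F` (induction on `i`), and this least such `B` also
satisfies `∀ y', G y' ∨ ¬ B y'` exactly when all the conditions `G∘H^i∘F` hold. Hence `∃B.φ`
is the infinite conjunction of the first-order sentences `E ∧ G∘H^i∘F`, and if `χ` defines it,
compactness (a nonprincipal ultraproduct over `ℕ`) shows that a finite part already implies `χ`.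
-/

section Semantics

variable {M : Type*} [L.Structure M]

theorem realize_phiSent_iff (B₀ : M → Prop) :
    @Sentence.Realize L' M (extStruct M B₀) phiSent ↔
      EM M ∧ (∀ y, FM M y ∨ B₀ y) ∧ (∀ y, GM M y ∨ ¬ B₀ y) ∧
        (∀ y y', HM M y y' ∨ B₀ y ∨ ¬ B₀ y') := by
  simp only [phiSent, Sentence.Realize, Formula.Realize, BoundedFormula.realize_inf,
    BoundedFormula.realize_all, BoundedFormula.realize_sup, BoundedFormula.realize_not,
    BoundedFormula.realize_rel (L := L') (R := LRelB.E),
    BoundedFormula.realize_rel₁ (L := L') (R := LRelB.F),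
    BoundedFormula.realize_rel₁ (L := L') (R := LRelB.G),
    BoundedFormula.realize_rel₁ (L := L') (R := LRelB.B),
    BoundedFormula.realize_rel₂ (L := L') (R := LRelB.H), and_assoc, or_assoc,
    Function.comp_apply, Term.realize_var, Sum.elim_inr, Matrix.empty_eq]
  exact Iff.rfl

theorem hm_or_hiterM_of_hiterM_succ {i : ℕ} {y z : M} (h : HiterM M (i + 1) y z) (y' : M) :
    HM M y y' ∨ HiterM M i y' z := by
  induction i generalizing z with
  | zero =>
    by_cases hz : y' = z
    · subst hz
      exact Or.inl ((h y).resolve_left (not_not.2 rfl))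
    · exact Or.inr hz
  | succ i ih =>
    refine or_iff_not_imp_left.2 fun hyy' y₁ => (h y₁).imp_left fun h₁ => ?_
    exact (ih h₁).resolve_left hyy'

theorem or_hiterM_of_forall_hm_or {B₀ : M → Prop} (hB : ∀ y y', HM M y y' ∨ B₀ y ∨ ¬ B₀ y')
    (i : ℕ) {y y' : M} (hy' : B₀ y') : B₀ y ∨ HiterM M i y y' := by
  induction i generalizing y' with
  | zero =>
    by_cases hyy' : y = y'
    · exact Or.inl (hyy' ▸ hy')
    · exact Or.inr hyy'
  | succ i ih =>
    refine or_iff_not_imp_left.2 fun hy y₁ => ?_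
    by_cases hy₁ : B₀ y₁
    · exact Or.inl ((ih hy₁).resolve_left hy)
    · exact Or.inr ((hB y₁ y').resolve_right fun h => (h.resolve_left hy₁ hy').elim)

theorem ghf_of_realize_phiSent {B₀ : M → Prop}
    (h : @Sentence.Realize L' M (extStruct M B₀) phiSent) (i : ℕ) : GHF M i := by
  obtain ⟨-, hF, hG, hH⟩ := (realize_phiSent_iff B₀).1 h
  refine fun y' => or_iff_not_imp_right.2 fun hy' y => (hG y).imp_right fun hy => ?_
  exact (or_hiterM_of_forall_hm_or hH i ((hF y').resolve_left hy')).resolve_left hy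

/-- The least predicate compatible with the conjuncts `∀ y, F y ∨ B y` and
`∀ y y', H y y' ∨ B y ∨ ¬ B y'` of `φ`. -/
def forcedB (M : Type*) [L.Structure M] (y : M) : Prop :=
  ∃ i y', ¬ FM M y' ∧ ¬ HiterM M i y y'

theorem realize_phiSent_forcedB (hE : EM M) (hGHF : ∀ i, GHF M i) :
    @Sentence.Realize L' M (extStruct M (forcedB M)) phiSent := by
  refine (realize_phiSent_iff _).2 ⟨hE, fun y => ?_, fun y => ?_, fun y y' => ?_⟩
  · exact or_iff_not_imp_left.2 fun hy => ⟨0, y, hy, not_not.2 rfl⟩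
  · refine or_iff_not_imp_left.2 fun hy ⟨i, y', hy', hyy'⟩ => ?_
    exact ((hGHF i y').resolve_right hy' y).elim hy hyy'
  · refine or_iff_not_imp_left.2 fun hyy' => or_iff_not_imp_right.2 fun hy' => ?_
    obtain ⟨i, z, hz, hy'z⟩ := not_not.1 hy'
    exact ⟨i + 1, z, hz, fun h => (hm_or_hiterM_of_hiterM_succ h y').elim hyy' hy'z⟩

theorem exists_realize_phiSent_iff :
    (∃ B₀ : M → Prop, @Sentence.Realize L' M (extStruct M B₀) phiSent) ↔
      EM M ∧ ∀ i, GHF M i :=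
  ⟨fun ⟨B₀, h⟩ => ⟨((realize_phiSent_iff B₀).1 h).1, ghf_of_realize_phiSent h⟩,
    fun ⟨hE, hGHF⟩ => ⟨forcedB M, realize_phiSent_forcedB hE hGHF⟩⟩

end Semantics

theorem realize_relabel_formula {α β M : Type*} [L.Structure M] {n : ℕ} (φ : L.Formula α)
    (g : α → β ⊕ Fin n) (v : β → M) (xs : Fin n → M) :
    (BoundedFormula.relabel g φ).Realize v xs ↔ φ.Realize (Sum.elim v xs ∘ g) := by
  rw [BoundedFormula.realize_relabel]
  exact iff_of_eq (congrArg _ (Subsingleton.elim _ _))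

def hIterF : ℕ → L.Formula (Fin 2)
  | 0 => ∼(Term.equal (var 0) (var 1))
  | k + 1 => ∀' (BoundedFormula.relabel (![Sum.inl 0, Sum.inr 0] : Fin 2 → Fin 2 ⊕ Fin 1)
      (hIterF k) ⊔ Relations.boundedFormula₂ LRel.H &0 (var (Sum.inl 1)))

def eSent : L.Sentence := Relations.boundedFormula LRel.E ![]

-- `&0` is the outer bound variable `y'` and `&1` the inner one `y`.
def ghfSent (i : ℕ) : L.Sentence :=
  ∀' ((∀' (Relations.boundedFormula₁ LRel.G &1 ⊔
      BoundedFormula.relabel (![Sum.inr 1, Sum.inr 0] : Fin 2 → Empty ⊕ Fin 2) (hIterF i))) ⊔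
    Relations.boundedFormula₁ LRel.F &0)

section Definability

variable {M : Type*} [L.Structure M]

theorem realize_hIterF (i : ℕ) (v : Fin 2 → M) :
    (hIterF i).Realize v ↔ HiterM M i (v 0) (v 1) := by
  induction i generalizing v with
  | zero => exact not_congr Iff.rfl
  | succ i ih =>
    simp only [hIterF, Formula.Realize, BoundedFormula.realize_all, BoundedFormula.realize_sup]
    exact forall_congr' fun a =>
      or_congr ((realize_relabel_formula _ _ _ _).trans (ih _)) BoundedFormula.realize_rel₂

theorem realize_eSent : M ⊨ eSent ↔ EM M := by
  simp only [eSent, Sentence.Realize, Formula.Realize,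
    BoundedFormula.realize_rel (L := L) (R := LRel.E), Matrix.empty_eq]
  exact Iff.rfl

theorem realize_ghfSent (i : ℕ) : M ⊨ ghfSent i ↔ GHF M i := by
  simp only [ghfSent, Sentence.Realize, Formula.Realize, BoundedFormula.realize_all,
    BoundedFormula.realize_sup]
  exact forall_congr' fun y' => or_congr (forall_congr' fun y =>
    or_congr BoundedFormula.realize_rel₁
      ((realize_relabel_formula _ _ _ _).trans (realize_hIterF _ _))) BoundedFormula.realize_rel₁

theorem realize_eSent_inf_ghfSent (i : ℕ) : M ⊨ eSent ⊓ ghfSent i ↔ EM M ∧ GHF M i :=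
  (Sentence.realize_inf M).trans (and_congr realize_eSent (realize_ghfSent i))

end Definability

theorem exists_forall_le_realize_imp {L : Language} (ψ : ℕ → L.Sentence) (χ : L.Sentence)
    (h : ∀ (M : Type u) [L.Structure M] [Nonempty M], (∀ i, M ⊨ ψ i) → M ⊨ χ) :
    ∃ k, ∀ (M : Type u) [L.Structure M] [Nonempty M], (∀ i ≤ k, M ⊨ ψ i) → M ⊨ χ := by
  by_contra! hk
  choose M _ _ hψ hχ using hk
  have hNψ (i : ℕ) : (Filter.hyperfilter ℕ : Filter ℕ).Product M ⊨ ψ i :=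
    (Ultraproduct.sentence_realize _).2 <|
      ((Filter.eventually_ge_atTop i).filter_mono Nat.hyperfilter_le_atTop).mono
        fun k hik => hψ k i hik
  obtain ⟨k, hk⟩ := ((Ultraproduct.sentence_realize _).1 (h _ hNψ)).exists
  exact hχ k hk

theorem fo_definable_exists_B_iff_finite_conjunction
    (χ : L.Sentence)
    (hχ : ∀ (M : Type u) [L.Structure M] [Nonempty M],
      M ⊨ χ ↔ ∃ B₀ : M → Prop, @FirstOrder.Language.Sentence.Realize L' M
        (extStruct M B₀) phiSent) :
    ∃ k : ℕ, ∀ (M : Type u) [L.Structure M] [Nonempty M],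
      M ⊨ χ ↔ (EM M ∧ ∀ i ≤ k, GHF M i) := by
  have hχ' (M : Type u) [L.Structure M] [Nonempty M] : M ⊨ χ ↔ EM M ∧ ∀ i, GHF M i :=
    (hχ M).trans exists_realize_phiSent_iff
  obtain ⟨k, hk⟩ := exists_forall_le_realize_imp (fun i => eSent ⊓ ghfSent i) χ
    fun M _ _ h => (hχ' M).2 ⟨((realize_eSent_inf_ghfSent 0).1 (h 0)).1,
      fun i => ((realize_eSent_inf_ghfSent i).1 (h i)).2⟩
  refine ⟨k, fun M _ _ => ⟨fun h => ?_, fun ⟨hE, hGHF⟩ => hk M fun i hi => ?_⟩⟩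
  · exact ⟨((hχ' M).1 h).1, fun i _ => ((hχ' M).1 h).2 i⟩
  · exact (realize_eSent_inf_ghfSent i).2 ⟨hE, hGHF i hi⟩
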